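/- Let (f, X) be an i.i.d. random iteration where each f_α : S → S is Lipschitz with constant c(α), and suppose ∫ log c dν < 0 (negative average log-Lipschitz constant). Then there exist a measurable C : Ω → [0,∞) and λ < 1 such that for ℙ-a.e. ω and all x, y ∈ S and all n, d(f_ω^n(x), f_ω^n(y)) ≤ C(ω) λⁿ d(x, y). -/

import Mathlib

open MeasureTheory Filter

variable {Ω E S : Type*}

/-- Forward composition `f_ω^n = f_{X (n-1) ω} ∘ ⋯ ∘ f_{X 0 ω}`. -/
def fwdComp (f : E → S → S) (X : ℕ → Ω → E) (ω : Ω) : ℕ → S → S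
  | 0 => id
  | n + 1 => f (X n ω) ∘ fwdComp f X ω n
/-
By the strong law of large numbers, `(1/n) ∑_{i<n} log c(X_i) → m := ∫ log c dν < 0` almost surely.
The Lipschitz constant of `f_ω^n` is at most `∏_{i<n} c(X_i ω) = exp(∑_{i<n} log c(X_i ω))`, and
dividing by `λ^n` with `λ = exp(m/2)` leaves `exp(∑_{i<n} log c(X_i ω) - n m/2)`, which tends to `0`
since the exponent is `n (m + o(1) - m/2) → -∞`. Its supremum over `n` is the random constant `C`.
-/

open Topology Finset

theorem dist_fwdComp_le_prod [PseudoMetricSpace S] {f : E → S → S} {c : E → ℝ}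
    (hc : ∀ α, 0 ≤ c α) (hLip : ∀ α, ∀ x y : S, dist (f α x) (f α y) ≤ c α * dist x y)
    (X : ℕ → Ω → E) (ω : Ω) (x y : S) (n : ℕ) :
    dist (fwdComp f X ω n x) (fwdComp f X ω n y) ≤ (∏ i ∈ range n, c (X i ω)) * dist x y := by
  induction n with
  | zero => simp [fwdComp]
  | succ n ih =>
    calc dist (fwdComp f X ω (n + 1) x) (fwdComp f X ω (n + 1) y)
        ≤ c (X n ω) * dist (fwdComp f X ω n x) (fwdComp f X ω n y) := hLip _ _ _
      _ ≤ c (X n ω) * ((∏ i ∈ range n, c (X i ω)) * dist x y) := by gcongr; exact hc _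
      _ = (∏ i ∈ range (n + 1), c (X i ω)) * dist x y := by rw [prod_range_succ]; ring

open ProbabilityTheory in
theorem ae_tendsto_average_comp [MeasurableSpace Ω] [MeasurableSpace E] {μ : Measure Ω}
    {ν : Measure E} {X : ℕ → Ω → E} (hXmeas : ∀ n, Measurable (X n)) (hindep : iIndepFun X μ)
    (hdist : ∀ n, μ.map (X n) = ν) {φ : E → ℝ} (hφ : Measurable φ) (hint : Integrable φ ν) :
    ∀ᵐ ω ∂μ, Tendsto (fun n : ℕ => (∑ i ∈ range n, φ (X i ω)) / n) atTop (𝓝 (∫ a, φ a ∂ν)) := by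
  have hident : ∀ n, IdentDistrib (X n) (X 0) μ μ := fun n =>
    ⟨(hXmeas n).aemeasurable, (hXmeas 0).aemeasurable, by rw [hdist n, hdist 0]⟩
  have hmean : ∫ ω, φ (X 0 ω) ∂μ = ∫ a, φ a ∂ν := by
    rw [← hdist 0, integral_map (hXmeas 0).aemeasurable hφ.aestronglyMeasurable]
  rw [← hdist 0] at hint
  rw [← hmean]
  exact strong_law_ae_real (fun n ω => φ (X n ω)) (hint.comp_measurable (hXmeas 0))
    (fun i j hij => (hindep.indepFun hij).comp hφ hφ) (fun n => (hident n).comp hφ)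

theorem tendsto_exp_sum_sub_mul_of_tendsto_average {y : ℕ → ℝ} {m μ : ℝ}
    (hy : Tendsto (fun n : ℕ => (∑ i ∈ range n, y i) / n) atTop (𝓝 m)) (hmμ : m < μ) :
    Tendsto (fun n : ℕ => Real.exp (∑ i ∈ range n, y i - n * μ)) atTop (𝓝 0) := by
  have h : Tendsto (fun n : ℕ => (n : ℝ) * ((∑ i ∈ range n, y i) / n - μ)) atTop atBot :=
    tendsto_natCast_atTop_atTop.atTop_mul_neg (sub_neg.2 hmμ) (hy.sub_const μ)
  refine Real.tendsto_exp_atBot.comp (h.congr fun n => ?_)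
  rcases n.eq_zero_or_pos with rfl | hn
  · simp
  · field_simp

theorem prod_le_iSup_mul_exp_pow {a : ℕ → ℝ} (ha : ∀ i, 0 < a i) {μ : ℝ}
    (hbdd : BddAbove (Set.range fun k : ℕ => Real.exp (∑ i ∈ range k, Real.log (a i) - k * μ)))
    (n : ℕ) :
    ∏ i ∈ range n, a i
      ≤ (⨆ k : ℕ, Real.exp (∑ i ∈ range k, Real.log (a i) - k * μ)) * Real.exp μ ^ n := by
  have hprod : ∏ i ∈ range n, a i
      = Real.exp (∑ i ∈ range n, Real.log (a i) - n * μ) * Real.exp μ ^ n := by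
    rw [← Real.exp_nat_mul, ← Real.exp_add, sub_add_cancel, Real.exp_sum]
    exact prod_congr rfl fun i _ => (Real.exp_log (ha i)).symm
  rw [hprod]
  gcongr
  exact le_ciSup hbdd n

theorem stmt14_general [MeasurableSpace Ω] [MeasurableSpace E] [MetricSpace S]
    (ℙ : Measure Ω) (ν : Measure E)
    (X : ℕ → Ω → E) (hXmeas : ∀ n, Measurable (X n))
    (hindep : ProbabilityTheory.iIndepFun X ℙ)
    (hdist : ∀ n, Measure.map (X n) ℙ = ν)
    (f : E → S → S) (c : E → ℝ) (hcpos : ∀ α, 0 < c α) (hcmeas : Measurable c)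
    (hLip : ∀ α, ∀ x y : S, dist (f α x) (f α y) ≤ c α * dist x y)
    (hint : Integrable (fun α => Real.log (c α)) ν)
    (hneg : ∫ α, Real.log (c α) ∂ν < 0) :
    ∃ (C : Ω → ℝ) (lam : ℝ), Measurable C ∧ (∀ ω, 0 ≤ C ω) ∧ lam < 1 ∧
      ∀ᵐ ω ∂ℙ, ∀ x y : S, ∀ n : ℕ,
        dist (fwdComp f X ω n x) (fwdComp f X ω n y) ≤ C ω * lam ^ n * dist x y := by
  set m := ∫ α, Real.log (c α) ∂ν
  have hlogc : Measurable fun α => Real.log (c α) := hcmeas.log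
  refine ⟨fun ω => ⨆ k : ℕ, Real.exp (∑ i ∈ range k, Real.log (c (X i ω)) - k * (m / 2)),
    Real.exp (m / 2), ?_, fun ω => Real.iSup_nonneg fun k => (Real.exp_pos _).le,
    Real.exp_lt_one_iff.2 (by linarith), ?_⟩
  · exact Measurable.iSup fun k => by fun_prop
  filter_upwards [ae_tendsto_average_comp hXmeas hindep hdist hlogc hint] with ω hω x y n
  have hbdd :=
    (tendsto_exp_sum_sub_mul_of_tendsto_average hω (by linarith : m < m / 2)).bddAbove_range
  calc dist (fwdComp f X ω n x) (fwdComp f X ω n y)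
      ≤ (∏ i ∈ range n, c (X i ω)) * dist x y :=
        dist_fwdComp_le_prod (fun α => (hcpos α).le) hLip X ω x y n
    _ ≤ _ := by
        gcongr
        exact prod_le_iSup_mul_exp_pow (fun i => hcpos _) hbdd n

/-- Negative average log-Lipschitz constant implies exponentially fast contraction: if each
`f_α` is `c α`-Lipschitz and `∫ log c dν < 0`, then there are a measurable `C : Ω → [0,∞)`
and `λ < 1` with `d(f_ω^n x, f_ω^n y) ≤ C ω * λ^n * d(x,y)` a.s., for all `x, y, n`. -/
theorem stmt14 [MeasurableSpace Ω] [MeasurableSpace E] [MetricSpace S]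
    (ℙ : Measure Ω) [IsProbabilityMeasure ℙ] (ν : Measure E) [IsProbabilityMeasure ν]
    (X : ℕ → Ω → E) (hXmeas : ∀ n, Measurable (X n))
    (hindep : ProbabilityTheory.iIndepFun X ℙ)
    (hdist : ∀ n, Measure.map (X n) ℙ = ν)
    (f : E → S → S) (c : E → ℝ) (hcpos : ∀ α, 0 < c α) (hcmeas : Measurable c)
    (hLip : ∀ α, ∀ x y : S, dist (f α x) (f α y) ≤ c α * dist x y)
    (hint : Integrable (fun α => Real.log (c α)) ν)
    (hneg : ∫ α, Real.log (c α) ∂ν < 0) :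
    ∃ (C : Ω → ℝ) (lam : ℝ), Measurable C ∧ (∀ ω, 0 ≤ C ω) ∧ lam < 1 ∧
      ∀ᵐ ω ∂ℙ, ∀ x y : S, ∀ n : ℕ,
        dist (fwdComp f X ω n x) (fwdComp f X ω n y) ≤ C ω * lam ^ n * dist x y :=
  stmt14_general ℙ ν X hXmeas hindep hdist f c hcpos hcmeas hLip hint hneg
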